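/- Let φ₀ : ℝ → ℝ be twice differentiable, k > 0, and define φ₁(t) = φ₀(t) + k·φ₀'(t). If φ₀(0) ≤ 0, φ₁(0) ≤ 0, and for all t ≥ 0, φ₁(t) ≥ 0 implies φ₁'(t) < 0, then for all t ≥ 0 both φ₀(t) ≤ 0 and φ₁(t) ≤ 0. -/

import Mathlib

/-!
A function whose derivative is negative wherever it is nonnegative cannot cross from `≤ 0` to
`> 0` (a fence argument with barrier `0`), so `φ₁` stays `≤ 0`. Then `φ₀' ≤ -φ₀ / k`, and
Grönwall's inequality bounds `φ₀(t)` by `φ₀(0) · exp (-t / k) ≤ 0`.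
-/

open Set

theorem nonpos_of_deriv_neg_of_nonneg {f : ℝ → ℝ} {a : ℝ} (hf : Differentiable ℝ f)
    (ha : f a ≤ 0) (hdec : ∀ t, a ≤ t → 0 ≤ f t → deriv f t < 0) :
    ∀ t, a ≤ t → f t ≤ 0 := fun _ ht =>
  image_le_of_deriv_right_lt_deriv_boundary (B := fun _ => 0) hf.continuous.continuousOn
    (fun x _ => (hf x).hasDerivAt.hasDerivWithinAt) ha (fun _ => hasDerivAt_const _ _)
    (fun x hx hfx => hdec x hx.1 hfx.ge) ⟨ht, le_rfl⟩

theorem nonpos_of_add_mul_deriv_nonpos {f : ℝ → ℝ} {a k : ℝ} (hf : Differentiable ℝ f)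
    (hk : 0 < k) (ha : f a ≤ 0) (hfk : ∀ t, a ≤ t → f t + k * deriv f t ≤ 0) :
    ∀ t, a ≤ t → f t ≤ 0 := by
  intro t ht
  have hderiv : ∀ x ∈ Ico a t, deriv f x ≤ -k⁻¹ * f x + 0 := fun x hx => by
    rw [add_zero, neg_mul, ← div_eq_inv_mul, le_neg, div_le_iff₀ hk]
    linarith [hfk x hx.1]
  calc f t ≤ gronwallBound (f a) (-k⁻¹) 0 (t - a) :=
        le_gronwallBound_of_liminf_deriv_right_le hf.continuous.continuousOn
          (fun x _ _ hr => (hf x).hasDerivAt.hasDerivWithinAt.liminf_right_slope_le hr)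
          le_rfl hderiv t ⟨ht, le_rfl⟩
    _ = f a * Real.exp (-k⁻¹ * (t - a)) := gronwallBound_ε0 _ _ _
    _ ≤ 0 := mul_nonpos_of_nonpos_of_nonneg ha (Real.exp_pos _).le

theorem stmt_6 (φ₀ : ℝ → ℝ) (k : ℝ)
    (hφ₀ : Differentiable ℝ φ₀) (hφ₀' : Differentiable ℝ (deriv φ₀))
    (hk : 0 < k)
    (φ₁ : ℝ → ℝ) (hφ₁ : φ₁ = fun t => φ₀ t + k * deriv φ₀ t)
    (h00 : φ₀ 0 ≤ 0) (h10 : φ₁ 0 ≤ 0)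
    (hdec : ∀ t : ℝ, 0 ≤ t → 0 ≤ φ₁ t → deriv φ₁ t < 0) :
    ∀ t : ℝ, 0 ≤ t → φ₀ t ≤ 0 ∧ φ₁ t ≤ 0 := by
  have hφ₁_diff : Differentiable ℝ φ₁ := by
    rw [hφ₁]
    exact hφ₀.add (hφ₀'.const_mul k)
  have hφ₁_nonpos := nonpos_of_deriv_neg_of_nonneg hφ₁_diff h10 hdec
  have hφ₀_nonpos : ∀ t, 0 ≤ t → φ₀ t ≤ 0 :=
    nonpos_of_add_mul_deriv_nonpos hφ₀ hk h00 fun t ht => by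
      simpa only [hφ₁] using hφ₁_nonpos t ht
  exact fun t ht => ⟨hφ₀_nonpos t ht, hφ₁_nonpos t ht⟩
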